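/- For M > 0 and w ∈ ℂ with w ∉ [0, M] (w off the positive real axis), the integral F(w, M) = ∫₀^M ln(1 + iζ/2)/(ζ − w) dζ equals ln(1 + iw/2)·ln((M − w)/(−w)) − L₂(−A(w,M)) + L₂(−A(w,0)), where A(w,ℓ) = (i/2)(ℓ − w)/(1 + iw/2) and L₂ is the dilogarithm, provided all logarithms are taken on branches continuous along the integration path. -/

import Mathlib

/-!
Both sides vanish at `M = 0`, so it suffices to differentiate the right-hand side in `M`.
Differentiating under the integral sign gives `L₂'(z) = -log (1 - z) / z` off the cut `[1, ∞)`.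
For `z = -A(w, M)` one has `1 - z = (1 + iM/2) / (1 + iw/2)`, a quotient of two numbers with
positive real part when `Im w < 0`, so its principal logarithm splits as
`log (1 + iM/2) - log (1 + iw/2)`; the resulting term `-log (1 + iw/2) / (M - w)` is cancelled
by the derivative of `log (1 + iw/2) · log ((M - w)/(-w))`, leaving the integrand.
-/

open Complex

/-- Euler's dilogarithm via the integral representation `L₂(z) = -∫₀¹ log(1 - t z)/t dt`. -/
noncomputable def dilogInt (z : ℂ) : ℂ := -∫ t in (0:ℝ)..1, Complex.log (1 - t*z) / t

/-- The coefficient `A(w,ℓ) = (i/2)(ℓ - w)/(1 + i w/2)`. -/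
noncomputable def Acoef (w ℓ : ℂ) : ℂ := (I/2) * (ℓ - w) / (1 + I*w/2)

open MeasureTheory Metric Set intervalIntegral

lemma log_div_of_re_pos {a b : ℂ} (ha : 0 < a.re) (hb : 0 < b.re) :
    log (a / b) = log a - log b := by
  have harg_a := abs_lt.1 (abs_arg_lt_pi_div_two_iff.2 (Or.inl ha))
  have harg_b := abs_lt.1 (abs_arg_lt_pi_div_two_iff.2 (Or.inl hb))
  have hexp : a / b = exp (log a - log b) := by
    rw [exp_sub, exp_log (ne_zero_of_re_pos ha), exp_log (ne_zero_of_re_pos hb)]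
  rw [hexp, log_exp] <;>
  · simp only [sub_im, log_im]
    linarith [Real.pi_pos]

lemma div_mem_slitPlane_of_re_pos {a b : ℂ} (ha : 0 < a.re) (hb : 0 < b.re) :
    a / b ∈ slitPlane := by
  have harg_a := abs_lt.1 (abs_arg_lt_pi_div_two_iff.2 (Or.inl ha))
  have harg_b := abs_lt.1 (abs_arg_lt_pi_div_two_iff.2 (Or.inl hb))
  refine mem_slitPlane_iff_arg.2
    ⟨fun h => ?_, div_ne_zero (ne_zero_of_re_pos ha) (ne_zero_of_re_pos hb)⟩
  rw [← log_im, log_div_of_re_pos ha hb, sub_im, log_im, log_im] at h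
  linarith

lemma one_sub_ofReal_mul_mem_slitPlane {z : ℂ} (hz : 1 - z ∈ slitPlane) {t : ℝ}
    (ht : t ∈ Icc (0:ℝ) 1) : 1 - (t:ℂ) * z ∈ slitPlane := by
  rw [sub_eq_add_neg] at hz
  simpa [sub_eq_add_neg, real_smul] using starConvex_one_slitPlane.add_smul_mem hz ht.1 ht.2

lemma exists_forall_le_norm_one_sub_ofReal_mul {z : ℂ} (hz : 1 - z ∈ slitPlane) :
    ∃ ε > 0, ∃ m > 0, ∀ x ∈ closedBall z ε,
      1 - x ∈ slitPlane ∧ ∀ t ∈ Icc (0:ℝ) 1, m ≤ ‖1 - (t:ℂ) * x‖ := by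
  have hnhds : {x : ℂ | 1 - x ∈ slitPlane} ∈ nhds z :=
    (isOpen_slitPlane.preimage (by fun_prop)).mem_nhds hz
  obtain ⟨ε, hε, hball⟩ := nhds_basis_closedBall.mem_iff.1 hnhds
  have hK : IsCompact (Icc (0:ℝ) 1 ×ˢ closedBall z ε) :=
    isCompact_Icc.prod (isCompact_closedBall z ε)
  obtain ⟨p, hp, hmin⟩ := hK.exists_isMinOn ⟨(0, z), ⟨by simp, mem_closedBall_self hε.le⟩⟩
    (f := fun p : ℝ × ℂ => ‖1 - (p.1:ℂ) * p.2‖) (by fun_prop)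
  have hm : 0 < ‖1 - (p.1:ℂ) * p.2‖ :=
    norm_pos_iff.2 (slitPlane_ne_zero (one_sub_ofReal_mul_mem_slitPlane (hball hp.2) hp.1))
  exact ⟨ε, hε, _, hm, fun x hx => ⟨hball hx, fun t ht => hmin (mk_mem_prod ht hx)⟩⟩

lemma hasDerivAt_log_one_sub_ofReal_mul {z : ℂ} (hz : 1 - z ∈ slitPlane) {t : ℝ}
    (ht : t ∈ Icc (0:ℝ) 1) :
    HasDerivAt (fun s : ℝ => log (1 - s * z)) (-z / (1 - t * z)) t := by
  have h : HasDerivAt (fun s : ℝ => 1 - (s:ℂ) * z) (-z) t := by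
    simpa using ((hasDerivAt_id (t:ℂ)).comp_ofReal.mul_const z).const_sub 1
  exact h.clog_real (one_sub_ofReal_mul_mem_slitPlane hz ht)

lemma norm_log_one_sub_ofReal_mul_le {x : ℂ} {m : ℝ} (hm : 0 < m) (hx : 1 - x ∈ slitPlane)
    (hbound : ∀ s ∈ Icc (0:ℝ) 1, m ≤ ‖1 - (s:ℂ) * x‖) {t : ℝ} (ht : t ∈ Icc (0:ℝ) 1) :
    ‖log (1 - t * x)‖ ≤ ‖x‖ / m * t := by
  have hderiv_le : ∀ s ∈ Ico (0:ℝ) 1, ‖-x / (1 - s * x)‖ ≤ ‖x‖ / m := fun s hs => by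
    rw [norm_div, norm_neg]
    exact div_le_div_of_nonneg_left (norm_nonneg x) hm (hbound s (Ico_subset_Icc_self hs))
  simpa using norm_image_sub_le_of_norm_deriv_le_segment'
    (fun s hs => (hasDerivAt_log_one_sub_ofReal_mul hx hs).hasDerivWithinAt) hderiv_le t ht

lemma integral_inv_one_sub_ofReal_mul {z : ℂ} (hz : 1 - z ∈ slitPlane) (hz0 : z ≠ 0) :
    ∫ t in (0:ℝ)..1, (1 - (t:ℂ) * z)⁻¹ = -log (1 - z) / z := by
  rw [eq_div_iff hz0, mul_comm, ← log_inv _ (slitPlane_arg_ne_pi hz), log_inv_eq_integral hz]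
  simp only [real_smul]

/-- Differentiation under the integral sign: near `z`, `1 - t x` stays a uniform distance `m`
away from `0` for `t ∈ [0, 1]`, which dominates the `x`-derivative by `1 / m` and, through the
mean value theorem, the integrand by `‖z‖ / m`. -/
lemma hasDerivAt_dilogInt {z : ℂ} (hz : 1 - z ∈ slitPlane) (hz0 : z ≠ 0) :
    HasDerivAt dilogInt (-log (1 - z) / z) z := by
  obtain ⟨ε, hε, m, hm, hball⟩ := exists_forall_le_norm_one_sub_ofReal_mul hz
  have hIoc : uIoc (0:ℝ) 1 = Ioc 0 1 := uIoc_of_le zero_le_one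
  have hmeas : ∀ x : ℂ, Measurable fun t : ℝ => log (1 - t * x) / t := fun x => by fun_prop
  have hint : IntervalIntegrable (fun t : ℝ => log (1 - t * z) / t) volume 0 1 := by
    rw [intervalIntegrable_iff, hIoc]
    refine Measure.integrableOn_of_bounded (M := ‖z‖ / m) measure_Ioc_lt_top.ne
      (hmeas z).aestronglyMeasurable ((ae_restrict_iff' measurableSet_Ioc).2 (ae_of_all _ ?_))
    intro t ht
    obtain ⟨hz', hbound⟩ := hball z (mem_closedBall_self hε.le)
    rw [norm_div, norm_real, Real.norm_of_nonneg ht.1.le, div_le_iff₀ ht.1]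
    exact norm_log_one_sub_ofReal_mul_le hm hz' hbound (Ioc_subset_Icc_self ht)
  have h_diff : ∀ t ∈ uIoc (0:ℝ) 1, ∀ x ∈ ball z ε,
      HasDerivAt (fun x => log (1 - t * x) / t) (-(1 - t * x)⁻¹) x := by
    intro t ht x hx
    rw [hIoc] at ht
    have hslit := one_sub_ofReal_mul_mem_slitPlane (hball x (ball_subset_closedBall hx)).1
      (Ioc_subset_Icc_self ht)
    refine ((((hasDerivAt_id x).const_mul (t:ℂ)).const_sub 1).clog hslit).div_const (t:ℂ)
      |>.congr_deriv ?_
    simp only [id, mul_one]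
    field_simp [ofReal_ne_zero.2 ht.1.ne', slitPlane_ne_zero hslit]
  have h_bound : ∀ t ∈ uIoc (0:ℝ) 1, ∀ x ∈ ball z ε, ‖-(1 - t * x)⁻¹‖ ≤ m⁻¹ := by
    intro t ht x hx
    rw [hIoc] at ht
    rw [norm_neg, norm_inv]
    exact inv_anti₀ hm ((hball x (ball_subset_closedBall hx)).2 t (Ioc_subset_Icc_self ht))
  have h := (hasDerivAt_integral_of_dominated_loc_of_deriv_le (ball_mem_nhds z hε)
    (.of_forall fun x => (hmeas x).aestronglyMeasurable) hint
    (by fun_prop : Measurable fun t : ℝ => -(1 - t * z)⁻¹).aestronglyMeasurable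
    (ae_of_all _ h_bound) intervalIntegrable_const (ae_of_all _ h_diff)).2.neg
  rwa [intervalIntegral.integral_neg, neg_neg, integral_inv_one_sub_ofReal_mul hz hz0] at h

lemma ofReal_sub_ne_zero_of_im_ne_zero {w : ℂ} (hw : w.im ≠ 0) (x : ℝ) : (x:ℂ) - w ≠ 0 :=
  sub_ne_zero.2 fun h => hw (h ▸ ofReal_im x)

lemma re_one_add_I_mul_div_two (w : ℂ) : (1 + I * w / 2).re = 1 - w.im / 2 := by
  simp [div_ofNat_re, sub_eq_add_neg, neg_div]

lemma one_add_Acoef {w : ℂ} (hw : 1 + I * w / 2 ≠ 0) (ℓ : ℂ) :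
    1 + Acoef w ℓ = (1 + I * ℓ / 2) / (1 + I * w / 2) := by
  rw [Acoef, eq_div_iff hw, add_mul, one_mul, div_mul_cancel₀ _ hw]
  ring

lemma hasDerivAt_Acoef (w ℓ : ℂ) : HasDerivAt (Acoef w) (I / 2 / (1 + I * w / 2)) ℓ :=
  (((hasDerivAt_id ℓ).sub_const w).const_mul (I / 2)).div_const (1 + I * w / 2)
    |>.congr_deriv (by rw [mul_one])

lemma hasDerivAt_dilogInt_neg_Acoef {w : ℂ} (hw : w.im < 0) (x : ℝ) :
    HasDerivAt (fun x : ℝ => dilogInt (-Acoef w x))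
      ((log (1 + I * w / 2) - log (1 + I * x / 2)) / (x - w)) x := by
  have hw_re : 0 < (1 + I * w / 2).re := by rw [re_one_add_I_mul_div_two]; linarith
  have hx_re : 0 < (1 + I * x / 2).re := by rw [re_one_add_I_mul_div_two]; simp
  have hxw := ofReal_sub_ne_zero_of_im_ne_zero hw.ne x
  have hw0 : 1 + I * w / 2 ≠ 0 := ne_zero_of_re_pos hw_re
  have h1A : 1 - -Acoef w x = (1 + I * x / 2) / (1 + I * w / 2) := by
    rw [sub_neg_eq_add, one_add_Acoef hw0]
  have hA0 : -Acoef w x ≠ 0 := by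
    simp only [Acoef, neg_ne_zero]
    exact div_ne_zero (mul_ne_zero (div_ne_zero I_ne_zero two_ne_zero) hxw) hw0
  have h1A_slit : 1 - -Acoef w x ∈ slitPlane := h1A ▸ div_mem_slitPlane_of_re_pos hx_re hw_re
  refine ((hasDerivAt_dilogInt h1A_slit hA0).comp (x:ℂ) (hasDerivAt_Acoef w x).neg).comp_ofReal
    |>.congr_deriv ?_
  rw [h1A, log_div_of_re_pos hx_re hw_re, Acoef]
  -- otherwise `field_simp` rewrites the denominator as `(2 + I * w) / 2` and loses `hw0`
  generalize 1 + I * w / 2 = D at hw0 ⊢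
  field_simp
  ring

lemma hasDerivAt_log_sub_div_neg {w : ℂ} (hw : w.im < 0) (x : ℝ) :
    HasDerivAt (fun x : ℝ => log ((x - w) / -w)) (1 / (x - w)) x := by
  have hw0 : w ≠ 0 := fun h => hw.ne (h ▸ zero_im)
  have hslit : ((x:ℂ) - w) / -w ∈ slitPlane := by
    rw [show ((x:ℂ) - w) / -w = (I * (w - x)) / (I * w) by field_simp; ring]
    exact div_mem_slitPlane_of_re_pos (by simpa using hw) (by simpa using hw)
  refine (((hasDerivAt_id (x:ℂ)).sub_const w).div_const (-w)).clog hslit |>.comp_ofReal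
    |>.congr_deriv ?_
  simp only [id]
  field_simp

theorem stmt9_general (M : ℝ) (w : ℂ) (hw : w.im < 0) :
    ∫ ζ in (0:ℝ)..M, Complex.log (1 + I*ζ/2) / ((ζ:ℂ) - w) =
      Complex.log (1 + I*w/2) * Complex.log ((M - w)/(-w))
        - dilogInt (-(Acoef w M)) + dilogInt (-(Acoef w 0)) := by
  have hderiv : ∀ x : ℝ, HasDerivAt
      (fun x : ℝ => log (1 + I * w / 2) * log ((x - w) / -w) - dilogInt (-Acoef w x))
      (log (1 + I * x / 2) / (x - w)) x := fun x => by
    refine ((hasDerivAt_log_sub_div_neg hw x).const_mul _).sub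
      (hasDerivAt_dilogInt_neg_Acoef hw x) |>.congr_deriv ?_
    ring
  have hcont : Continuous fun x : ℝ => log (1 + I * x / 2) / (x - w) :=
    (Continuous.clog (by fun_prop) fun x => Or.inl (by simp)).div
      (by fun_prop) (ofReal_sub_ne_zero_of_im_ne_zero hw.ne)
  rw [integral_eq_sub_of_hasDerivAt (fun x _ => hderiv x) (hcont.intervalIntegrable 0 M)]
  simp [div_self (neg_ne_zero.2 fun h : w = 0 => hw.ne (h ▸ zero_im))]

theorem stmt9 (M : ℝ) (hM : 0 < M) (w : ℂ) (hw : w.im < 0) :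
    ∫ ζ in (0:ℝ)..M, Complex.log (1 + I*ζ/2) / ((ζ:ℂ) - w) =
      Complex.log (1 + I*w/2) * Complex.log ((M - w)/(-w))
        - dilogInt (-(Acoef w M)) + dilogInt (-(Acoef w 0)) :=
  stmt9_general M w hw
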